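/- arXiv:2407.03793 — 3 statements merged into one kernel-verified Lean document; each statement's English description precedes it below -/
import Mathlib

section
/- Let A be a symmetric positive semidefinite operator on a finite-dimensional real inner product space with spectral radius ρ(A) ≤ λ, where λ > 0. Define S = I - 2.9 λ⁻¹ A + 2.15 λ⁻² A². Then the spectral radius of SᵀAS = S A S satisfies ρ(S A S) ≤ λ/16. -/
open scoped RealInnerProductSpace

private lemma key_poly (t : ℝ) (h0 : 0 ≤ t) (h1 : t ≤ 1) :
    t * (1 - 2.9*t + 2.15*t^2)^2 ≤ 1/16 := by
  have h1t : (0:ℝ) ≤ 1 - t := by linarith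
  nlinarith [mul_nonneg h1t (sq_nonneg (t^2 - 0.8489*t + 0.1116)),
             mul_nonneg h1t (sq_nonneg (t - 0.0616)), h1t, sq_nonneg t]

/-- If `A` is a self-adjoint positive semidefinite operator on a finite-dimensional real
inner product space with all eigenvalues `≤ λ` (`λ > 0`), and
`S = I - 2.9 λ⁻¹ A + 2.15 λ⁻² A²`, then every eigenvalue of `S A S` is `≤ λ/16`. -/
theorem stmt_2 {V : Type*} [NormedAddCommGroup V] [InnerProductSpace ℝ V]
    [FiniteDimensional ℝ V] (A : V →ₗ[ℝ] V) (hA : A.IsSymmetric)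
    (hpsd : ∀ v : V, 0 ≤ ⟪A v, v⟫) (lam : ℝ) (hlam : 0 < lam)
    (hbound : ∀ μ : ℝ, Module.End.HasEigenvalue A μ → μ ≤ lam)
    (S : V →ₗ[ℝ] V)
    (hS : S = LinearMap.id - (2.9 * lam⁻¹) • A + (2.15 * (lam ^ 2)⁻¹) • (A ∘ₗ A)) :
    ∀ μ : ℝ, Module.End.HasEigenvalue (S ∘ₗ A ∘ₗ S) μ → μ ≤ lam / 16 := by
  intro μ hμ
  obtain ⟨v, hv⟩ := hμ.exists_hasEigenvector
  -- S is symmetric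
  have hAA : (A ∘ₗ A).IsSymmetric := by
    intro x y
    simp only [LinearMap.comp_apply]
    rw [hA, hA]
  have hSsym : S.IsSymmetric := by
    rw [hS]
    exact (LinearMap.IsSymmetric.id.sub (hA.smul rfl)).add (hAA.smul rfl)
  -- T := S ∘ A ∘ S is symmetric
  have hTsym : (S ∘ₗ A ∘ₗ S).IsSymmetric := by
    intro x y
    simp only [LinearMap.comp_apply]
    rw [hSsym, hA, hSsym]
  -- eigenbasis of A
  set b := hA.eigenvectorBasis (rfl : Module.finrank ℝ V = Module.finrank ℝ V) with hb
  set ν := hA.eigenvalues (rfl : Module.finrank ℝ V = Module.finrank ℝ V) with hν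
  have hApp : ∀ i, A (b i) = ν i • b i := fun i => hA.apply_eigenvectorBasis _ i
  have hT_basis : ∀ i, (S ∘ₗ A ∘ₗ S) (b i)
      = (ν i * (1 - 2.9 * lam⁻¹ * ν i + 2.15 * (lam^2)⁻¹ * (ν i)^2)^2) • b i := by
    intro i
    have hSb : S (b i) = (1 - 2.9 * lam⁻¹ * ν i + 2.15 * (lam^2)⁻¹ * (ν i)^2) • b i := by
      rw [hS]
      simp only [LinearMap.add_apply, LinearMap.sub_apply, LinearMap.smul_apply,
        LinearMap.id_apply, LinearMap.comp_apply, hApp, map_smul, smul_smul]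
      module
    simp only [LinearMap.comp_apply, hSb, map_smul, hApp i, smul_smul]
    ring_nf
  -- some coordinate of v is nonzero
  have hvne : v ≠ 0 := hv.2
  have : ∃ i, ⟪b i, v⟫ ≠ 0 := by
    by_contra h
    push_neg at h
    apply hvne
    have : b.repr v = 0 := by
      ext i
      simpa [b.repr_apply_apply] using h i
    simpa using b.repr.injective (by simpa using this)
  obtain ⟨i, hci⟩ := this
  -- μ equals the eigenvalue of T on b i
  have hTv : (S ∘ₗ A ∘ₗ S) v = μ • v := hv.apply_eq_smul
  have hkey : μ * ⟪b i, v⟫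
      = (ν i * (1 - 2.9 * lam⁻¹ * ν i + 2.15 * (lam^2)⁻¹ * (ν i)^2)^2) * ⟪b i, v⟫ := by
    have h2 : ⟪(S ∘ₗ A ∘ₗ S) (b i), v⟫ = μ * ⟪b i, v⟫ := by
      rw [hTsym (b i) v, hTv, real_inner_smul_right]
    rw [hT_basis i, real_inner_smul_left] at h2
    linarith
  have hμeq : μ = ν i * (1 - 2.9 * lam⁻¹ * ν i + 2.15 * (lam^2)⁻¹ * (ν i)^2)^2 :=
    mul_right_cancel₀ hci hkey
  -- bounds on ν i
  have hν_le : ν i ≤ lam := hbound _ (hA.hasEigenvalue_eigenvalues _ i)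
  have hν_nonneg : 0 ≤ ν i := by
    have h1 : ⟪A (b i), b i⟫ = ν i := by
      rw [hApp i, real_inner_smul_left, real_inner_self_eq_norm_sq, b.orthonormal.1 i]
      simp
    have := hpsd (b i)
    rwa [h1] at this
  -- conclude by the scalar inequality
  set t := ν i / lam with ht
  have ht0 : 0 ≤ t := div_nonneg hν_nonneg hlam.le
  have ht1 : t ≤ 1 := (div_le_one hlam).2 hν_le
  have hrw : μ = lam * (t * (1 - 2.9*t + 2.15*t^2)^2) := by
    rw [hμeq, ht]
    field_simp
  rw [hrw]
  have := key_poly t ht0 ht1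
  calc lam * (t * (1 - 2.9*t + 2.15*t^2)^2) ≤ lam * (1/16) := by
        exact mul_le_mul_of_nonneg_left this hlam.le
    _ = lam / 16 := by ring
end

section
/- Define recursively λ_J = λ > 0 and λ_j = 16^{j-J} λ, and operators A_J = A with ρ(A) ≤ λ, S_j = I - 2.9 λ_j⁻¹ A_j + 2.15 λ_j⁻² A_j², and A_{j-1} = Q_jᵀ A_j Q_j where Q_j = S_j ∘ P_j with P_j an orthogonal projection onto a subspace. Then ρ(A_j) ≤ λ_j = 16^{j-J} λ for all 1 ≤ j ≤ J. -/
/-!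
On level `j` write `κ = λ_j`. The smoother is `S_j = p(A_j)` for the quadratic
`p(x) = 1 - 2.9 x / κ + 2.15 x² / κ²`, so `S_j A_j S_j = (X p²)(A_j)`, whose eigenvalues are
`μ p(μ)²` for the eigenvalues `μ ≤ κ` of `A_j`. Rescaled to `κ = 1`, the scalar bound
`t p(t)² ≤ 1/16` for `t ≤ 1` has an explicit sum-of-squares certificate. Hence
`⟪S_j A_j S_j v, v⟫ ≤ κ/16 ‖v‖²`; sandwiching by the orthogonal projection, a symmetric
contraction, keeps this quadratic-form bound, which bounds every eigenvalue of `A_{j-1}` by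
`κ/16 = λ_{j-1}`. Descending induction from `j = J` finishes the proof.
-/

open scoped RealInnerProductSpace

open Polynomial

lemma mul_sq_smoothing_factor_le {t : ℝ} (ht : t ≤ 1) :
    t * (1 - 2.9 * t + 2.15 * t ^ 2) ^ 2 ≤ 1 / 16 := by
  have hq : 0 ≤ 0.800875 * t ^ 2 - 0.317 * t + 0.0336 := by
    nlinarith [sq_nonneg (1.60175 * t - 0.317)]
  -- Equality holds at `t = 1`, hence the factor `1 - t`.
  have hsos : 1 / 16 - t * (1 - 2.9 * t + 2.15 * t ^ 2) ^ 2 =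
      (1 - t) * ((2.15 * t ^ 2 - 1.825 * t + 0.17) ^ 2
        + (0.800875 * t ^ 2 - 0.317 * t + 0.0336)) := by
    ring
  nlinarith [mul_nonneg (sub_nonneg.2 ht)
    (add_nonneg (sq_nonneg (2.15 * t ^ 2 - 1.825 * t + 0.17)) hq)]

noncomputable def smoothingPoly (κ : ℝ) : ℝ[X] :=
  1 - C (2.9 * κ⁻¹) * X + C (2.15 * (κ ^ 2)⁻¹) * X ^ 2

lemma eval_smoothingPoly_mul_self_le {κ μ : ℝ} (hκ : 0 < κ) (hμ : μ ≤ κ) :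
    (smoothingPoly κ).eval μ * μ * (smoothingPoly κ).eval μ ≤ κ / 16 := by
  have hscale : (smoothingPoly κ).eval μ * μ * (smoothingPoly κ).eval μ =
      κ * ((μ / κ) * (1 - 2.9 * (μ / κ) + 2.15 * (μ / κ) ^ 2) ^ 2) := by
    simp only [smoothingPoly, eval_add, eval_sub, eval_one, eval_mul, eval_C, eval_X, eval_pow]
    field_simp
  rw [hscale]
  have := mul_sq_smoothing_factor_le ((div_le_one hκ).2 hμ)
  nlinarith

section

variable {H : Type*} [NormedAddCommGroup H] [InnerProductSpace ℝ H]

lemma aeval_smoothingPoly (T : H →ₗ[ℝ] H) (κ : ℝ) :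
    aeval T (smoothingPoly κ) =
      LinearMap.id - (2.9 * κ⁻¹) • T + (2.15 * (κ ^ 2)⁻¹) • (T ∘ₗ T) := by
  simp [smoothingPoly, Algebra.smul_def, pow_two, Module.End.mul_eq_comp, Module.End.one_eq_id]

lemma LinearMap.IsSymmetric.aeval {T : H →ₗ[ℝ] H} (hT : T.IsSymmetric) (p : ℝ[X]) :
    (Polynomial.aeval T p).IsSymmetric := by
  induction p using Polynomial.induction_on' with
  | add p q hp hq => rw [map_add]; exact hp.add hq
  | monomial n a => rw [aeval_monomial, ← Algebra.smul_def]; exact (hT.pow n).smul (conj_trivial a)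

lemma LinearMap.IsSymmetric.inner_map_self_le_of_orthonormalBasis {ι : Type*} [Fintype ι]
    {M : H →ₗ[ℝ] H} (hM : M.IsSymmetric) (b : OrthonormalBasis ι ℝ H) {ν : ι → ℝ}
    (hb : ∀ i, M (b i) = ν i • b i) {c : ℝ} (hν : ∀ i, ν i ≤ c) (u : H) :
    ⟪M u, u⟫ ≤ c * ‖u‖ ^ 2 := by
  calc ⟪M u, u⟫ = ∑ i, ν i * ⟪b i, u⟫ ^ 2 := by
        rw [← b.sum_inner_mul_inner]
        refine Finset.sum_congr rfl fun i _ => ?_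
        rw [hM, hb, real_inner_smul_right, real_inner_comm u]
        ring
    _ ≤ ∑ i, c * ⟪b i, u⟫ ^ 2 :=
        Finset.sum_le_sum fun i _ => mul_le_mul_of_nonneg_right (hν i) (sq_nonneg _)
    _ = c * ‖u‖ ^ 2 := by rw [← Finset.mul_sum, b.sum_sq_inner_right]

lemma LinearMap.IsSymmetric.inner_aeval_self_le [FiniteDimensional ℝ H] {T : H →ₗ[ℝ] H}
    (hT : T.IsSymmetric) (p : ℝ[X]) {c : ℝ}
    (hp : ∀ μ, Module.End.HasEigenvalue T μ → p.eval μ ≤ c) (u : H) :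
    ⟪Polynomial.aeval T p u, u⟫ ≤ c * ‖u‖ ^ 2 :=
  (hT.aeval p).inner_map_self_le_of_orthonormalBasis (hT.eigenvectorBasis rfl)
    (fun i => Module.End.aeval_apply_of_mem_apply_eq_smul (hT.apply_eigenvectorBasis rfl i))
    (fun i => hp _ (hT.hasEigenvalue_eigenvalues rfl i)) u

lemma Module.End.HasEigenvalue.le_of_inner_map_self_le {T : Module.End ℝ H} {μ c : ℝ}
    (hμ : T.HasEigenvalue μ) (hT : ∀ v, ⟪T v, v⟫ ≤ c * ‖v‖ ^ 2) : μ ≤ c := by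
  obtain ⟨v, hv⟩ := hμ.exists_hasEigenvector
  have hv_pos : 0 < ‖v‖ ^ 2 := by have := norm_pos_iff.2 hv.2; positivity
  have := hT v
  rw [hv.apply_eq_smul, real_inner_smul_left, real_inner_self_eq_norm_sq] at this
  exact le_of_mul_le_mul_right this hv_pos

variable [FiniteDimensional ℝ H] {T : H →ₗ[ℝ] H} {κ : ℝ}

lemma inner_map_smoothed_le (hT : T.IsSymmetric) (hκ : 0 < κ)
    (hTκ : ∀ μ, Module.End.HasEigenvalue T μ → μ ≤ κ) (u : H) :
    ⟪T (aeval T (smoothingPoly κ) u), aeval T (smoothingPoly κ) u⟫ ≤ κ / 16 * ‖u‖ ^ 2 := by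
  set q := smoothingPoly κ
  have hSTS : aeval T q (T (aeval T q u)) = aeval T (q * X * q) u := by
    simp only [map_mul, aeval_X, Module.End.mul_apply]
  rw [← hT.aeval q, hSTS]
  refine hT.inner_aeval_self_le _ (fun μ hμ => ?_) u
  simpa only [eval_mul, eval_X] using eval_smoothingPoly_mul_self_le hκ (hTκ μ hμ)

lemma hasEigenvalue_coarse_le (hT : T.IsSymmetric) (hκ : 0 < κ)
    (hTκ : ∀ μ, Module.End.HasEigenvalue T μ → μ ≤ κ) {P : H →ₗ[ℝ] H} (hP : P.IsSymmetric)
    (hP_le : ∀ v, ‖P v‖ ≤ ‖v‖) {μ : ℝ}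
    (hμ : Module.End.HasEigenvalue (P ∘ₗ aeval T (smoothingPoly κ) ∘ₗ T ∘ₗ
      aeval T (smoothingPoly κ) ∘ₗ P) μ) :
    μ ≤ κ / 16 := by
  refine hμ.le_of_inner_map_self_le fun w => ?_
  simp only [LinearMap.comp_apply]
  rw [hP, hT.aeval]
  calc _ ≤ κ / 16 * ‖P w‖ ^ 2 := inner_map_smoothed_le hT hκ hTκ (P w)
    _ ≤ κ / 16 * ‖w‖ ^ 2 := by gcongr; exact hP_le w

end

theorem stmt_9_general {H : Type*} [NormedAddCommGroup H] [InnerProductSpace ℝ H]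
    [FiniteDimensional ℝ H] (J : ℕ) (V : ℕ → Submodule ℝ H)
    (A S : ℕ → H →ₗ[ℝ] H) (lam : ℝ) (hlam : 0 < lam)
    (hsym : ∀ j : ℕ, (A j).IsSymmetric)
    (hAJ : ∀ μ : ℝ, Module.End.HasEigenvalue (A J) μ → μ ≤ lam)
    (hS : ∀ j : ℕ, 1 ≤ j → j ≤ J →
      S j = LinearMap.id - (2.9 * (lam / 16 ^ (J - j))⁻¹) • A j
        + (2.15 * ((lam / 16 ^ (J - j)) ^ 2)⁻¹) • (A j ∘ₗ A j))
    (hrec : ∀ j : ℕ, 1 ≤ j → j ≤ J →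
      A (j - 1) =
        ((V (j - 1)).subtypeL.comp (Submodule.orthogonalProjection (V (j - 1)))).toLinearMap ∘ₗ
          S j ∘ₗ A j ∘ₗ S j ∘ₗ
            ((V (j - 1)).subtypeL.comp (Submodule.orthogonalProjection (V (j - 1)))).toLinearMap) :
    ∀ j : ℕ, 1 ≤ j → j ≤ J →
      ∀ μ : ℝ, Module.End.HasEigenvalue (A j) μ → μ ≤ lam / 16 ^ (J - j) := by
  rintro j - hjJ
  induction hjJ using Nat.decreasingInduction with
  | self => simpa using hAJ
  | of_succ k hk ih =>
    intro μ hμ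
    have hA := hrec (k + 1) le_add_self hk
    rw [hS (k + 1) le_add_self hk, ← aeval_smoothingPoly, Nat.add_sub_cancel] at hA
    rw [hA] at hμ
    calc μ ≤ lam / 16 ^ (J - (k + 1)) / 16 :=
          hasEigenvalue_coarse_le (hsym _) (by positivity) ih
            (V k).starProjection_isSymmetric (V k).norm_starProjection_apply_le hμ
      _ = lam / 16 ^ (J - k) := by rw [div_div, ← pow_succ, show J - (k + 1) + 1 = J - k by omega]

/-- Multigrid level-operator bound: with `λ_j = 16^{j-J} λ`,
`S_j = I - 2.9 λ_j⁻¹ A_j + 2.15 λ_j⁻² A_j²`, and `A_{j-1} = Q_jᵀ A_j Q_j`,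
`Q_j = S_j ∘ P_{j-1}` (`P_k` the orthogonal projection onto `V_k`), starting from
`ρ(A_J) ≤ λ`, one has `ρ(A_j) ≤ 16^{j-J} λ` for all `1 ≤ j ≤ J`. -/
theorem stmt_9 {H : Type*} [NormedAddCommGroup H] [InnerProductSpace ℝ H]
    [FiniteDimensional ℝ H] (J : ℕ) (hJ : 1 ≤ J) (V : ℕ → Submodule ℝ H)
    (hnest : ∀ j : ℕ, V j ≤ V (j + 1))
    (A S : ℕ → H →ₗ[ℝ] H) (lam : ℝ) (hlam : 0 < lam)
    (hsym : ∀ j : ℕ, (A j).IsSymmetric) (hpsd : ∀ (j : ℕ) (v : H), 0 ≤ ⟪A j v, v⟫)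
    (hAJ : ∀ μ : ℝ, Module.End.HasEigenvalue (A J) μ → μ ≤ lam)
    (hS : ∀ j : ℕ, 1 ≤ j → j ≤ J →
      S j = LinearMap.id - (2.9 * (lam / 16 ^ (J - j))⁻¹) • A j
        + (2.15 * ((lam / 16 ^ (J - j)) ^ 2)⁻¹) • (A j ∘ₗ A j))
    (hrec : ∀ j : ℕ, 1 ≤ j → j ≤ J →
      A (j - 1) =
        ((V (j - 1)).subtypeL.comp (Submodule.orthogonalProjection (V (j - 1)))).toLinearMap ∘ₗ
          S j ∘ₗ A j ∘ₗ S j ∘ₗ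
            ((V (j - 1)).subtypeL.comp (Submodule.orthogonalProjection (V (j - 1)))).toLinearMap) :
    ∀ j : ℕ, 1 ≤ j → j ≤ J →
      ∀ μ : ℝ, Module.End.HasEigenvalue (A j) μ → μ ≤ lam / 16 ^ (J - j) :=
  stmt_9_general J V A S lam hlam hsym hAJ hS hrec
end

section
/- Let V₁ ⊆ … ⊆ V_J be nested finite-dimensional subspaces of L²(Ω) with h_j = 2^{J−j} h. Suppose for every v ∈ V_J there exists v^c ∈ H²(Ω) with ‖v − v^c‖_{L²(Ω)} ≤ C h² ‖v‖_A and |v^c|_{H²(Ω)} ≤ C‖v‖_A, and the L² projection I^j onto V_j satisfies ‖w − I^j w‖_{L²} ≤ C h_j² |w|_{H²} for w ∈ H²(Ω). Then min_{w ∈ V_j} ‖v − w‖²_{L²(Ω)} ≤ C 16^{J−j} h⁴ ‖v‖_A² for all v ∈ V_J and 1 ≤ j ≤ J. -/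
/-- Weak approximation property: let `V 1 ⊆ … ⊆ V J` be nested subspaces of the
(L²-type) inner product space `H` with mesh sizes `h_j = 2^{J−j} h`. If every `v ∈ V J`
admits an `H²`-conforming companion `vc` (member of the set `H2`, with `H²`-seminorm `s`)
with `‖v − vc‖ ≤ C h² ‖v‖_A` and `s vc ≤ C ‖v‖_A`, and the projections `I j` onto `V j`
satisfy `‖w − I j w‖ ≤ C h_j² s w` for `w ∈ H2`, then
`min_{w ∈ V j} ‖v − w‖² ≤ C' 16^{J−j} h⁴ ‖v‖_A²` for all `v ∈ V J`, `1 ≤ j ≤ J`. -/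
theorem stmt_15 {H : Type*} [NormedAddCommGroup H] [InnerProductSpace ℝ H]
    (J : ℕ) (hJ : 1 ≤ J) (V : ℕ → Submodule ℝ H) (hnest : ∀ j : ℕ, V j ≤ V (j + 1))
    (h : ℝ) (hh : 0 < h) (normA : H → ℝ) (hnormA : ∀ v : H, 0 ≤ normA v)
    (H2 : Set H) (s : H → ℝ) (hs : ∀ w : H, 0 ≤ s w)
    (I : ℕ → H →ₗ[ℝ] H) (hrange : ∀ (j : ℕ) (w : H), I j w ∈ V j)
    (C : ℝ) (hC : 0 < C)
    (hcomp : ∀ v ∈ V J, ∃ vc ∈ H2, ‖v - vc‖ ≤ C * h ^ 2 * normA v ∧ s vc ≤ C * normA v)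
    (hproj : ∀ w ∈ H2, ∀ j : ℕ, ‖w - I j w‖ ≤ C * (2 ^ (J - j) * h) ^ 2 * s w) :
    ∃ C' > 0, ∀ v ∈ V J, ∀ j : ℕ, 1 ≤ j → j ≤ J →
      ∃ w ∈ V j, ‖v - w‖ ^ 2 ≤ C' * 16 ^ (J - j) * h ^ 4 * normA v ^ 2 := by
  refine ⟨(C + C ^ 2) ^ 2, by positivity, ?_⟩
  intro v hv j hj1 hjJ
  obtain ⟨vc, hvc, hclose, hsem⟩ := hcomp v hv
  refine ⟨I j vc, hrange j vc, ?_⟩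
  have h2 : ‖vc - I j vc‖ ≤ C * (2 ^ (J - j) * h) ^ 2 * (C * normA v) := by
    refine le_trans (hproj vc hvc j) ?_
    exact mul_le_mul_of_nonneg_left hsem (by positivity)
  have hpow : (1:ℝ) ≤ (2:ℝ) ^ (J - j) := one_le_pow₀ one_le_two
  have hb : C * h ^ 2 * normA v ≤ C * ((2:ℝ) ^ (J - j)) ^ 2 * h ^ 2 * normA v := by
    have h1 : (1:ℝ) ≤ ((2:ℝ) ^ (J - j)) ^ 2 := one_le_pow₀ hpow
    nlinarith [mul_nonneg (mul_nonneg (mul_nonneg (sub_nonneg.2 h1) hC.le) (sq_nonneg h)) (hnormA v)]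
  have h3 : ‖v - I j vc‖ ≤ (C + C ^ 2) * ((2:ℝ) ^ (J - j)) ^ 2 * h ^ 2 * normA v := by
    calc ‖v - I j vc‖ = ‖(v - vc) + (vc - I j vc)‖ := by rw [sub_add_sub_cancel]
      _ ≤ ‖v - vc‖ + ‖vc - I j vc‖ := norm_add_le _ _
      _ ≤ C * ((2:ℝ) ^ (J - j)) ^ 2 * h ^ 2 * normA v
            + C * (2 ^ (J - j) * h) ^ 2 * (C * normA v) :=
          add_le_add (hclose.trans hb) h2
      _ = (C + C ^ 2) * ((2:ℝ) ^ (J - j)) ^ 2 * h ^ 2 * normA v := by ring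
  have hkey : ((C + C ^ 2) * ((2:ℝ) ^ (J - j)) ^ 2 * h ^ 2 * normA v) ^ 2
      = (C + C ^ 2) ^ 2 * 16 ^ (J - j) * h ^ 4 * normA v ^ 2 := by
    have h16 : (16:ℝ) ^ (J - j) = (((2:ℝ) ^ (J - j)) ^ 2) ^ 2 := by
      rw [← pow_mul, ← pow_mul, show (16:ℝ) = 2 ^ 4 by norm_num, ← pow_mul]
      congr 1
      ring
    rw [h16]; ring
  rw [← hkey]
  exact pow_le_pow_left₀ (norm_nonneg _) h3 2
end
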